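/- Consider a balanced mixture of two product distributions: X_1,…,X_N i.i.d. from D_1 with mean p_1, and Y_1,…,Y_N i.i.d. from D_2 with mean p_2, all independent. Let score(X,Y) = ⟨x,y⟩. For a balanced cut (S,S̄) obtained from the perfect partition T = ({X_i},{Y_i}) by swapping L points from each side (1 ≤ L ≤ N/2), define diff(T,(S,S̄),L) = score(S,S̄) − score(T). Then E[diff(T,(S,S̄),L)] = (N−L)·L·K·γ, where γ = (1/K)‖p_1−p_2‖_2^2. -/

import Mathlib

/-!
For independent random vectors `a`, `b` the expectation of `⟨a, b⟩` factors as `⟨E a, E b⟩`.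
Hence each of the `L (N - L)` terms of `diff` has expectation
`⟨p₂, p₂⟩ - ⟨p₂, p₁⟩ + ⟨p₁, p₁⟩ - ⟨p₁, p₂⟩ = ‖p₁ - p₂‖² = K γ`.
-/

open MeasureTheory ProbabilityTheory
open scoped Matrix

section

variable {Ω ι : Type*} [MeasurableSpace Ω] {μ : Measure Ω}

lemma integrable_of_forall_eq_zero_or_eq_one [IsFiniteMeasure μ] {f : Ω → ℝ}
    (hf : Measurable f) (h01 : ∀ ω, f ω = 0 ∨ f ω = 1) : Integrable f μ := by
  refine (integrable_const 1).mono' hf.aestronglyMeasurable (ae_of_all _ fun ω => ?_)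
  rcases h01 ω with h | h <;> simp [h]

lemma integral_sum_sum_eq_of_forall {κ : Type*} [Fintype ι] [Fintype κ]
    {F : ι → κ → Ω → ℝ} {c : ℝ} (hF : ∀ j i, Integrable (F j i) μ)
    (hc : ∀ j i, μ[F j i] = c) :
    μ[fun ω => ∑ j, ∑ i, F j i ω] = Fintype.card ι * Fintype.card κ * c := by
  rw [integral_finsetSum _ fun j _ => integrable_finsetSum _ fun i _ => hF j i]
  simp only [integral_finsetSum _ fun i _ => hF _ i, hc, Finset.sum_const, Finset.card_univ,
    nsmul_eq_mul]
  ring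

section DotProduct

variable [Fintype ι] {u v x y : Ω → ι → ℝ}

lemma ProbabilityTheory.IndepFun.integrable_dotProduct (hux : IndepFun u x μ)
    (hu : ∀ k, Integrable (fun ω => u ω k) μ) (hx : ∀ k, Integrable (fun ω => x ω k) μ) :
    Integrable (fun ω => u ω ⬝ᵥ x ω) μ :=
  integrable_finsetSum _ fun k _ =>
    (hux.comp (measurable_pi_apply k) (measurable_pi_apply k)).integrable_mul (hu k) (hx k)

lemma ProbabilityTheory.IndepFun.integral_dotProduct (hux : IndepFun u x μ)
    (hu : ∀ k, Integrable (fun ω => u ω k) μ) (hx : ∀ k, Integrable (fun ω => x ω k) μ) :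
    μ[fun ω => u ω ⬝ᵥ x ω] = (fun k => μ[fun ω => u ω k]) ⬝ᵥ (fun k => μ[fun ω => x ω k]) := by
  have hk (k : ι) := hux.comp (measurable_pi_apply k) (measurable_pi_apply k)
  refine (integral_finsetSum _ fun k _ => ?_).trans (Finset.sum_congr rfl fun k _ => ?_)
  · exact (hk k).integrable_mul (hu k) (hx k)
  · exact (hk k).integral_mul_eq_mul_integral
      (hu k).aestronglyMeasurable (hx k).aestronglyMeasurable

/-- The contribution of the swapped pair `(u, v)` and the unswapped pair `(x, y)` to
`diff(T,(S,S̄),L)`: `u` moves from the side of `x` to the side of `y`, and `v` the other way. -/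
def pairSwapGain (u v x y : Ω → ι → ℝ) (ω : Ω) : ℝ :=
  v ω ⬝ᵥ y ω - v ω ⬝ᵥ x ω + u ω ⬝ᵥ x ω - u ω ⬝ᵥ y ω

variable (hu : ∀ k, Integrable (fun ω => u ω k) μ) (hv : ∀ k, Integrable (fun ω => v ω k) μ)
  (hx : ∀ k, Integrable (fun ω => x ω k) μ) (hy : ∀ k, Integrable (fun ω => y ω k) μ)
  (hux : IndepFun u x μ) (huy : IndepFun u y μ) (hvx : IndepFun v x μ) (hvy : IndepFun v y μ)
include hu hv hx hy hux huy hvx hvy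

lemma integrable_pairSwapGain : Integrable (pairSwapGain u v x y) μ :=
  (((hvy.integrable_dotProduct hv hy).sub (hvx.integrable_dotProduct hv hx)).add
    (hux.integrable_dotProduct hu hx)).sub (huy.integrable_dotProduct hu hy)

lemma integral_pairSwapGain :
    μ[pairSwapGain u v x y] =
      (fun k => μ[fun ω => u ω k] - μ[fun ω => v ω k]) ⬝ᵥ
        (fun k => μ[fun ω => x ω k] - μ[fun ω => y ω k]) := by
  have hvy' := hvy.integrable_dotProduct hv hy
  have hvx' := hvx.integrable_dotProduct hv hx
  have hux' := hux.integrable_dotProduct hu hx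
  have huy' := huy.integrable_dotProduct hu hy
  change μ[(fun ω => v ω ⬝ᵥ y ω) - (fun ω => v ω ⬝ᵥ x ω) + (fun ω => u ω ⬝ᵥ x ω)
    - (fun ω => u ω ⬝ᵥ y ω)] = _
  rw [integral_sub' ((hvy'.sub hvx').add hux') huy', integral_add' (hvy'.sub hvx') hux',
    integral_sub' hvy' hvx', hvy.integral_dotProduct hv hy,
    hvx.integral_dotProduct hv hx, hux.integral_dotProduct hu hx, huy.integral_dotProduct hu hy]
  simp only [dotProduct, ← Finset.sum_sub_distrib, ← Finset.sum_add_distrib]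
  exact Finset.sum_congr rfl fun k _ => by ring

end DotProduct

end

theorem expected_diff_cut_eq_general
    {Ω : Type*} [MeasurableSpace Ω] (μ : Measure Ω) [IsProbabilityMeasure μ]
    (N L K : ℕ) (hL2 : 2 * L ≤ N)
    (p1 p2 : Fin K → ℝ) (γ : ℝ)
    (hγ : γ = (1 / (K : ℝ)) * ∑ k, (p1 k - p2 k) ^ 2) (hK : 0 < K)
    (X Y : Fin (N - L) → Ω → Fin K → ℝ)
    (U V : Fin L → Ω → Fin K → ℝ)
    (hXmeas : ∀ i k, Measurable (fun ω => X i ω k))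
    (hYmeas : ∀ i k, Measurable (fun ω => Y i ω k))
    (hUmeas : ∀ j k, Measurable (fun ω => U j ω k))
    (hVmeas : ∀ j k, Measurable (fun ω => V j ω k))
    (hX01 : ∀ i ω k, X i ω k = 0 ∨ X i ω k = 1)
    (hY01 : ∀ i ω k, Y i ω k = 0 ∨ Y i ω k = 1)
    (hU01 : ∀ j ω k, U j ω k = 0 ∨ U j ω k = 1)
    (hV01 : ∀ j ω k, V j ω k = 0 ∨ V j ω k = 1)
    (hXmean : ∀ i k, μ[fun ω => X i ω k] = p1 k)
    (hYmean : ∀ i k, μ[fun ω => Y i ω k] = p2 k)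
    (hUmean : ∀ j k, μ[fun ω => U j ω k] = p1 k)
    (hVmean : ∀ j k, μ[fun ω => V j ω k] = p2 k)
    (hindep : iIndepFun
      (m := fun _ : (Fin (N - L) ⊕ Fin (N - L)) ⊕ (Fin L ⊕ Fin L) =>
        (inferInstance : MeasurableSpace (Fin K → ℝ)))
      (Sum.elim (Sum.elim X Y) (Sum.elim U V)) μ) :
    μ[fun ω => ∑ j, ∑ i,
        ((∑ k, V j ω k * Y i ω k) - (∑ k, V j ω k * X i ω k)
          + (∑ k, U j ω k * X i ω k) - (∑ k, U j ω k * Y i ω k))]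
      = ((N : ℝ) - L) * L * K * γ := by
  have hcoord : ∀ Z : Ω → Fin K → ℝ, (∀ k, Measurable fun ω => Z ω k) →
      (∀ ω k, Z ω k = 0 ∨ Z ω k = 1) → ∀ k, Integrable (fun ω => Z ω k) μ :=
    fun Z hZ hZ01 k => integrable_of_forall_eq_zero_or_eq_one (hZ k) (hZ01 · k)
  have hUX : ∀ j i, IndepFun (U j) (X i) μ := fun j i =>
    hindep.indepFun (i := .inr (.inl j)) (j := .inl (.inl i)) (by simp)
  have hUY : ∀ j i, IndepFun (U j) (Y i) μ := fun j i =>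
    hindep.indepFun (i := .inr (.inl j)) (j := .inl (.inr i)) (by simp)
  have hVX : ∀ j i, IndepFun (V j) (X i) μ := fun j i =>
    hindep.indepFun (i := .inr (.inr j)) (j := .inl (.inl i)) (by simp)
  have hVY : ∀ j i, IndepFun (V j) (Y i) μ := fun j i =>
    hindep.indepFun (i := .inr (.inr j)) (j := .inl (.inr i)) (by simp)
  have hgain : ∀ j i, Integrable (pairSwapGain (U j) (V j) (X i) (Y i)) μ ∧
      μ[pairSwapGain (U j) (V j) (X i) (Y i)] = K * γ := fun j i => by
    have hU := hcoord _ (hUmeas j) (hU01 j)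
    have hV := hcoord _ (hVmeas j) (hV01 j)
    have hX := hcoord _ (hXmeas i) (hX01 i)
    have hY := hcoord _ (hYmeas i) (hY01 i)
    refine ⟨integrable_pairSwapGain hU hV hX hY (hUX j i) (hUY j i) (hVX j i) (hVY j i), ?_⟩
    rw [integral_pairSwapGain hU hV hX hY (hUX j i) (hUY j i) (hVX j i) (hVY j i), hγ]
    simp only [hUmean, hVmean, hXmean, hYmean, dotProduct, ← sq]
    field_simp
  change μ[fun ω => ∑ j, ∑ i, pairSwapGain (U j) (V j) (X i) (Y i) ω] = _
  rw [integral_sum_sum_eq_of_forall (fun j i => (hgain j i).1) (fun j i => (hgain j i).2)]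
  simp only [Fintype.card_fin, Nat.cast_sub (by omega : L ≤ N)]
  ring

/-- In the balanced mixture, for a balanced cut with L swapped pairs,
E[diff(T,(S,S̄),L)] = (N−L)·L·K·γ. -/
theorem expected_diff_cut_eq
    {Ω : Type*} [MeasurableSpace Ω] (μ : Measure Ω) [IsProbabilityMeasure μ]
    (N L K : ℕ) (hL1 : 1 ≤ L) (hL2 : 2 * L ≤ N)
    (p1 p2 : Fin K → ℝ) (γ : ℝ)
    (hγ : γ = (1 / (K : ℝ)) * ∑ k, (p1 k - p2 k) ^ 2) (hK : 0 < K)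
    (X Y : Fin (N - L) → Ω → Fin K → ℝ)
    (U V : Fin L → Ω → Fin K → ℝ)
    (hXmeas : ∀ i k, Measurable (fun ω => X i ω k))
    (hYmeas : ∀ i k, Measurable (fun ω => Y i ω k))
    (hUmeas : ∀ j k, Measurable (fun ω => U j ω k))
    (hVmeas : ∀ j k, Measurable (fun ω => V j ω k))
    (hX01 : ∀ i ω k, X i ω k = 0 ∨ X i ω k = 1)
    (hY01 : ∀ i ω k, Y i ω k = 0 ∨ Y i ω k = 1)
    (hU01 : ∀ j ω k, U j ω k = 0 ∨ U j ω k = 1)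
    (hV01 : ∀ j ω k, V j ω k = 0 ∨ V j ω k = 1)
    (hXmean : ∀ i k, μ[fun ω => X i ω k] = p1 k)
    (hYmean : ∀ i k, μ[fun ω => Y i ω k] = p2 k)
    (hUmean : ∀ j k, μ[fun ω => U j ω k] = p1 k)
    (hVmean : ∀ j k, μ[fun ω => V j ω k] = p2 k)
    (hindep : iIndepFun
      (m := fun _ : (Fin (N - L) ⊕ Fin (N - L)) ⊕ (Fin L ⊕ Fin L) =>
        (inferInstance : MeasurableSpace (Fin K → ℝ)))
      (Sum.elim (Sum.elim X Y) (Sum.elim U V)) μ) :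
    μ[fun ω => ∑ j, ∑ i,
        ((∑ k, V j ω k * Y i ω k) - (∑ k, V j ω k * X i ω k)
          + (∑ k, U j ω k * X i ω k) - (∑ k, U j ω k * Y i ω k))]
      = ((N : ℝ) - L) * L * K * γ :=
  expected_diff_cut_eq_general μ N L K hL2 p1 p2 γ hγ hK X Y U V hXmeas hYmeas hUmeas hVmeas hX01
    hY01 hU01 hV01 hXmean hYmean hUmean hVmean hindep
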